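/- Let E and F be real normed vector spaces, let f : E → F, let x : ℝ → E be continuous on [a, b] and differentiable on (a, b), and fix t⋆ ∈ [a, b], w ∈ F, and g₀ ∈ F. Suppose 𝒥 : E ≃L[ℝ] F is a continuous linear equivalence such that for every t in (a, b), f is differentiable at x(t) with fderiv f (x(t)) = 𝒥 (as a continuous linear map), and suppose f(x(t)) = g₀ + (t - t⋆) • w for all t ∈ [a, b]. Then for every t ∈ [a, b], x(t) = x(t⋆) + (t - t⋆) • 𝒥⁻¹(w), i.e. the state trajectory is an affine function of time. -/
import Mathlib

/-- Power flow linearization (Proposition 2): if `g t = f (x t)` is affine in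
time with slope `w` and the Jacobian of `f` along the trajectory equals a fixed
invertible linear map `𝒥`, then the state trajectory is affine in time with
constant velocity `𝒥⁻¹ w`. -/
theorem power_flow_linearization
    {E F : Type*} [NormedAddCommGroup E] [NormedSpace ℝ E] [CompleteSpace E]
    [NormedAddCommGroup F] [NormedSpace ℝ F] [CompleteSpace F]
    (f : E → F) (x : ℝ → E) (a b : ℝ) (hab : a ≤ b)
    (hx_cont : ContinuousOn x (Set.Icc a b))
    (hx_diff : DifferentiableOn ℝ x (Set.Ioo a b))
    (tstar : ℝ) (htstar : tstar ∈ Set.Icc a b) (w g₀ : F)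
    (𝒥 : E ≃L[ℝ] F)
    (hf_diff : ∀ t ∈ Set.Ioo a b, DifferentiableAt ℝ f (x t))
    (hf_deriv : ∀ t ∈ Set.Ioo a b, fderiv ℝ f (x t) = (𝒥 : E →L[ℝ] F))
    (hg : ∀ t ∈ Set.Icc a b, f (x t) = g₀ + (t - tstar) • w) :
    ∀ t ∈ Set.Icc a b, x t = x tstar + (t - tstar) • (𝒥.symm w) := by
  rcases eq_or_lt_of_le hab with rfl | hlt
  · intro t ht
    have h1 : t = a := le_antisymm ht.2 ht.1
    have h2 : tstar = a := le_antisymm htstar.2 htstar.1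
    subst h1; subst h2; simp
  -- define the auxiliary function φ
  set φ : ℝ → E := fun t => x t - (t - tstar) • (𝒥.symm w) with hφ
  have hφcont : ContinuousOn φ (Set.Icc a b) := by
    apply hx_cont.sub
    exact (Continuous.smul (by fun_prop) continuous_const).continuousOn
  -- φ has derivative 0 on Ioo
  have hφderiv : ∀ t ∈ Set.Ioo a b, HasDerivAt φ 0 t := by
    intro t ht
    have hxt : DifferentiableAt ℝ x t :=
      (hx_diff t ht).differentiableAt (isOpen_Ioo.mem_nhds ht)
    have hxd : HasDerivAt x (deriv x t) t := hxt.hasDerivAt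
    -- f ∘ x has derivative 𝒥 (deriv x t)
    have hchain : HasDerivAt (fun s => f (x s)) (𝒥 (deriv x t)) t := by
      have := (hf_diff t ht).hasFDerivAt.comp_hasDerivAt t hxd
      rwa [hf_deriv t ht] at this
    -- f ∘ x is affine on a neighborhood of t
    have haff : HasDerivAt (fun s => f (x s)) w t := by
      have h1 : HasDerivAt (fun s : ℝ => g₀ + (s - tstar) • w) w t := by
        have : HasDerivAt (fun s : ℝ => s - tstar) 1 t :=
          (hasDerivAt_id t).sub_const tstar
        simpa using (this.smul_const w).const_add g₀
      refine h1.congr_of_eventuallyEq ?_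
      filter_upwards [isOpen_Ioo.mem_nhds ht] with s hs
      exact hg s (Set.Ioo_subset_Icc_self hs)
    have hvw : 𝒥 (deriv x t) = w := hchain.unique haff
    have hv : deriv x t = 𝒥.symm w := by
      rw [← hvw]; simp
    have : HasDerivAt φ (deriv x t - 𝒥.symm w) t := by
      have h2 : HasDerivAt (fun s : ℝ => (s - tstar) • (𝒥.symm w)) (𝒥.symm w) t := by
        have : HasDerivAt (fun s : ℝ => s - tstar) 1 t :=
          (hasDerivAt_id t).sub_const tstar
        simpa using this.smul_const (𝒥.symm w)
      exact hxd.sub h2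
    rw [hv] at this
    simpa using this
  -- φ is constant on Ioo
  have hconst : ∀ s ∈ Set.Ioo a b, ∀ s' ∈ Set.Ioo a b, φ s = φ s' := by
    intro s hs s' hs'
    apply (convex_Ioo a b).is_const_of_fderivWithin_eq_zero
      (fun t ht => ((hφderiv t ht).differentiableAt).differentiableWithinAt)
      (fun t ht => ?_) hs hs'
    rw [fderivWithin_of_isOpen isOpen_Ioo ht]
    have := (hφderiv t ht).hasFDerivAt.fderiv
    rw [this]; ext1; simp
  -- fix a point in Ioo
  set m := (a + b) / 2 with hm
  have hmI : m ∈ Set.Ioo a b := ⟨by linarith, by linarith⟩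
  have key : ∀ t ∈ Set.Icc a b, φ t = φ m := by
    intro t ht
    have hcl : t ∈ closure (Set.Ioo a b) := by
      rwa [closure_Ioo hlt.ne]
    have hne : (nhdsWithin t (Set.Ioo a b)).NeBot :=
      mem_closure_iff_nhdsWithin_neBot.mp hcl
    have h1 : Filter.Tendsto φ (nhdsWithin t (Set.Ioo a b)) (nhds (φ t)) :=
      ((hφcont t ht).mono Set.Ioo_subset_Icc_self)
    have h2 : Filter.Tendsto φ (nhdsWithin t (Set.Ioo a b)) (nhds (φ m)) := by
      apply Filter.Tendsto.congr' _ tendsto_const_nhds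
      filter_upwards [self_mem_nhdsWithin] with s hs
      exact (hconst s hs m hmI).symm
    exact tendsto_nhds_unique h1 h2
  intro t ht
  have := (key t ht).trans (key tstar htstar).symm
  simp only [hφ] at this
  have h := sub_eq_sub_iff_add_eq_add.mp this
  simp only [sub_self, zero_smul] at *
  -- this : x t - (t - tstar) • 𝒥.symm w = x tstar - 0
  rw [sub_zero] at this
  linear_combination (norm := abel) this
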